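/- arXiv:2605.01983 — 2 statements merged into one kernel-verified Lean document; each statement's English description precedes it below -/
import Mathlib

section
/- Let G be a Lie group and let a, b assign to every g ∈ G tangent vectors a(g), b(g) ∈ T_gG. Then the following are equivalent: (a) a(g*h) = dR_h|_g(a(g)) + dL_g|_h(b(h)) for all g, h ∈ G; (b) a(g) = dR_g|_1(a(1)) + b(g) for all g ∈ G, and b(g*h) = dR_h|_g(b(g)) + dL_g|_h(b(h)) for all g, h ∈ G. Moreover, either condition implies b(1) = 0. (Trivialized, fixed-base-point form of the paper's Theorem 7.6 on the coefficients A^I_μ, and of the Section 2.3 result that generalized principal connections are associated only to Lie group fiber bundle connections and are determined by their value at the identity together with the Lie group fiber bundle connection.) -/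
/-- Transport of a dependent tangent-vector family along an equality of base points
(`TangentSpace` is definitionally the model space, so this is an honest equality). -/
private theorem gpc_cast
    {E : Type*} [NormedAddCommGroup E] [NormedSpace ℝ E]
    {H : Type*} [TopologicalSpace H] (I : ModelWithCorners ℝ E H)
    {G : Type*} [TopologicalSpace G] [ChartedSpace H G]
    (c : (g : G) → TangentSpace I g) {x y : G} (hxy : x = y) :
    (show E from c x) = (show E from c y) := by subst hxy; rfl

/-- Chain rule for right translations at the identity. -/
private theorem gpc_key
    {E : Type*} [NormedAddCommGroup E] [NormedSpace ℝ E]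
    {H : Type*} [TopologicalSpace H] (I : ModelWithCorners ℝ E H)
    {G : Type*} [TopologicalSpace G] [ChartedSpace H G] [Group G] [LieGroup I (⊤ : ℕ∞) G]
    (g h : G) (v : TangentSpace I (1 : G)) :
    mfderiv I I (fun k : G => k * (g * h)) 1 v
      = mfderiv I I (fun k : G => k * h) g (mfderiv I I (fun k : G => k * g) 1 v) := by
  have hfun : (fun k : G => k * (g * h)) = (fun k : G => k * h) ∘ (fun k : G => k * g) := by
    funext k; simp [mul_assoc]
  have hc := mfderiv_comp (I' := I) (1 : G)
    (mdifferentiableAt_mul_right (a := h) (b := (1 : G) * g))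
    (mdifferentiableAt_mul_right (a := g) (b := (1 : G)))
  rw [hfun, hc]
  exact congrArg
    (fun x : G => (show E from
      mfderiv I I (fun k : G => k * h) x (mfderiv I I (fun k : G => k * g) 1 v)))
    (one_mul g)

/-- **Trivialized, fixed-base-point form of the paper's Theorem 7.6** (coefficients `A^I_μ`), and of
the Section 2.3 result that generalized principal connections are associated only to Lie group
fiber bundle connections and are determined by their value at the identity together with the Lie
group fiber bundle connection.
Let `a, b` assign to every `g ∈ G` tangent vectors `a g, b g ∈ T_g G`.  The following are
equivalent:
(a) `a (g*h) = dR_h|_g (a g) + dL_g|_h (b h)` for all `g, h`;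
(b) `a g = dR_g|_1 (a 1) + b g` for all `g`, and
    `b (g*h) = dR_h|_g (b g) + dL_g|_h (b h)` for all `g, h`.
Moreover, either condition implies `b 1 = 0`. -/
theorem generalizedPrincipalConnection_local_characterization
    {E : Type*} [NormedAddCommGroup E] [NormedSpace ℝ E]
    {H : Type*} [TopologicalSpace H] (I : ModelWithCorners ℝ E H)
    {G : Type*} [TopologicalSpace G] [ChartedSpace H G] [Group G] [LieGroup I (⊤ : ℕ∞) G]
    (a b : (g : G) → TangentSpace I g) :
    ((∀ g h : G, a (g * h)
        = mfderiv I I (fun k : G => k * h) g (a g)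
          + mfderiv I I (fun k : G => g * k) h (b h))
      ↔ ((∀ g : G, a g = (show TangentSpace I g from mfderiv I I (fun k : G => k * g) 1 (a 1)) + b g)
          ∧ (∀ g h : G, b (g * h)
              = mfderiv I I (fun k : G => k * h) g (b g)
                + mfderiv I I (fun k : G => g * k) h (b h))))
    ∧ ((∀ g h : G, a (g * h)
        = mfderiv I I (fun k : G => k * h) g (a g)
          + mfderiv I I (fun k : G => g * k) h (b h)) → b 1 = 0) := by
  -- derivative of left translation by 1 is the identity
  have hL1 : ∀ (x : G) (v : TangentSpace I x),
      mfderiv I I (fun k : G => 1 * k) x v = v := by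
    intro x v
    rw [show (fun k : G => 1 * k) = id from funext fun k => one_mul k, mfderiv_id]
    rfl
  have hR1 : ∀ (v : TangentSpace I (1 : G)),
      mfderiv I I (fun k : G => k * 1) 1 v = v := by
    intro v
    rw [show (fun k : G => k * 1) = id from funext fun k => mul_one k, mfderiv_id]
    rfl
  -- either condition implies b 1 = 0
  have hb1 : (∀ g h : G, a (g * h)
        = mfderiv I I (fun k : G => k * h) g (a g)
          + mfderiv I I (fun k : G => g * k) h (b h)) → b 1 = 0 := by
    intro ha
    have t := ha 1 1
    rw [hL1, hR1] at t
    have t2 : a 1 = a 1 + b 1 := ((gpc_cast I a (one_mul 1)).symm).trans t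
    exact (left_eq_add).mp t2
  refine ⟨⟨fun ha => ?_, fun hb g h => ?_⟩, hb1⟩
  · have hid : ∀ g : G, a g
        = (show TangentSpace I g from mfderiv I I (fun k : G => k * g) 1 (a 1)) + b g := by
      intro g
      have t := ha 1 g
      rw [hL1] at t
      exact ((gpc_cast I a (one_mul g)).symm).trans t
    refine ⟨hid, fun g h => ?_⟩
    have h1 := ha g h
    rw [hid (g * h), hid g, gpc_key I g h (a 1),
      (mfderiv I I (fun k : G => k * h) g).map_add, add_assoc] at h1
    exact add_left_cancel h1
  · obtain ⟨hid, hco⟩ := hb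
    rw [hid (g * h), hid g, gpc_key I g h (a 1), hco g h,
      (mfderiv I I (fun k : G => k * h) g).map_add, add_assoc]
end

section
/- Let G be a Lie group and φ : G → G a group automorphism such that both φ and its inverse φ⁻¹ are smooth. Suppose b assigns to every g ∈ G a tangent vector b(g) ∈ T_gG and satisfies b(g*h) = dR_h|_g(b(g)) + dL_g|_h(b(h)) for all g, h ∈ G. Define the pushforward family b^φ(g) := dφ|_{φ⁻¹(g)}(b(φ⁻¹(g))) ∈ T_gG, where dφ|_k is the mfderiv of φ at k. Then b^φ satisfies the same identity: b^φ(g*h) = dR_h|_g(b^φ(g)) + dL_g|_h(b^φ(h)) for all g, h ∈ G. (The fiberwise-automorphism part of the paper's Appendix A: invariance of the local coordinate characterization of Lie group fiber bundle connections under the coordinate changes (1).) -/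
/-- **Invariance of the local coordinate characterization of Lie group fiber bundle connections
under fiberwise automorphisms** (the fiberwise-automorphism part of the paper's Appendix A,
coordinate changes (1)).
Let `φ : G → G` be a group automorphism such that `φ` and `φ⁻¹` are smooth, and let `b` assign to
every `g ∈ G` a tangent vector `b g ∈ T_g G` satisfying
`b (g*h) = dR_h|_g (b g) + dL_g|_h (b h)`.  Then the pushforward family
`b^φ g := dφ|_(φ⁻¹ g) (b (φ⁻¹ g))` satisfies the same identity. -/
theorem lieGroupFiberBundleConnection_pushforward_by_automorphism
    {E : Type*} [NormedAddCommGroup E] [NormedSpace ℝ E]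
    {H : Type*} [TopologicalSpace H] (I : ModelWithCorners ℝ E H)
    {G : Type*} [TopologicalSpace G] [ChartedSpace H G] [Group G] [LieGroup I (⊤ : ℕ∞) G]
    (φ : G ≃* G) (hφ : ContMDiff I I (⊤ : ℕ∞) φ) (hφ_symm : ContMDiff I I (⊤ : ℕ∞) φ.symm)
    (b : (g : G) → TangentSpace I g)
    (hb : ∀ g h : G, b (g * h)
        = mfderiv I I (fun k : G => k * h) g (b g)
          + mfderiv I I (fun k : G => g * k) h (b h)) :
    ∀ g h : G,
      (show TangentSpace I (g * h) from
          mfderiv I I φ (φ.symm (g * h)) (b (φ.symm (g * h))))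
        = mfderiv I I (fun k : G => k * h) g
            (show TangentSpace I g from mfderiv I I φ (φ.symm g) (b (φ.symm g)))
          + mfderiv I I (fun k : G => g * k) h
              (show TangentSpace I h from mfderiv I I φ (φ.symm h) (b (φ.symm h))) := by
  intro g h
  have hφd : ∀ x : G, MDifferentiableAt I I φ x := fun x => (hφ x).mdifferentiableAt (by simp)
  have hRd : ∀ (a x : G), MDifferentiableAt I I (fun k : G => k * a) x :=
    fun a x => contMDiff_mul_right.mdifferentiableAt (n := ((⊤ : ℕ∞) : WithTop ℕ∞)) (by simp)
  have hLd : ∀ (a x : G), MDifferentiableAt I I (fun k : G => a * k) x :=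
    fun a x => contMDiff_mul_left.mdifferentiableAt (n := ((⊤ : ℕ∞) : WithTop ℕ∞)) (by simp)
  set g' := φ.symm g with hg'
  set h' := φ.symm h with hh'
  have hgh : φ.symm (g * h) = g' * h' := map_mul φ.symm g h
  have hg : φ g' = g := φ.apply_symm_apply g
  have hh : φ h' = h := φ.apply_symm_apply h
  rw [hgh, hb g' h', (mfderiv I I φ (g' * h')).map_add]
  have key : ∀ (x y : G) (v : TangentSpace I x),
      mfderiv I I φ (x * y) (mfderiv I I (fun k : G => k * y) x v)
        = mfderiv I I (fun k : G => k * φ y) (φ x) (mfderiv I I φ x v) := by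
    intro x y v
    have h1 : mfderiv I I (φ ∘ fun k : G => k * y) x
        = (mfderiv I I φ (x * y)).comp (mfderiv I I (fun k : G => k * y) x) :=
      mfderiv_comp x (hφd _) (hRd _ _)
    have h2 : mfderiv I I ((fun k : G => k * φ y) ∘ φ) x
        = (mfderiv I I (fun k : G => k * φ y) (φ x)).comp (mfderiv I I φ x) :=
      mfderiv_comp x (hRd _ _) (hφd _)
    have he : (φ ∘ fun k : G => k * y) = ((fun k : G => k * φ y) ∘ φ) := by
      ext k; simp [Function.comp, map_mul]
    rw [he] at h1
    exact DFunLike.congr_fun (h1.symm.trans h2) v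
  have key2 : ∀ (x y : G) (v : TangentSpace I y),
      mfderiv I I φ (x * y) (mfderiv I I (fun k : G => x * k) y v)
        = mfderiv I I (fun k : G => φ x * k) (φ y) (mfderiv I I φ y v) := by
    intro x y v
    have h1 : mfderiv I I (φ ∘ fun k : G => x * k) y
        = (mfderiv I I φ (x * y)).comp (mfderiv I I (fun k : G => x * k) y) :=
      mfderiv_comp y (hφd _) (hLd _ _)
    have h2 : mfderiv I I ((fun k : G => φ x * k) ∘ φ) y
        = (mfderiv I I (fun k : G => φ x * k) (φ y)).comp (mfderiv I I φ y) :=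
      mfderiv_comp y (hLd _ _) (hφd _)
    have he : (φ ∘ fun k : G => x * k) = ((fun k : G => φ x * k) ∘ φ) := by
      ext k; simp [Function.comp, map_mul]
    rw [he] at h1
    exact DFunLike.congr_fun (h1.symm.trans h2) v
  have k1 := key g' h' (b g')
  have k2 := key2 g' h' (b h')
  rw [hg, hh] at k1 k2
  rw [k1, k2]
  rfl
end
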